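/- arXiv:1204.0590 — 2 statements merged into one kernel-verified Lean document; each statement's English description precedes it below -/
import Mathlib

section
/- Let H be as above (finite atomic combination with poles in the disk of radius ρ < 1) and let θ_k = 2πk/n for k = 0,…,n-1. Then the squared H² norm (1/2π)∫₀^{2π}|H(e^{iθ})|² dθ is bounded above by (1/n)Σ_{k=0}^{n-1}|H(e^{iθ_k})|² + (4π/n)·((1+ρ)/(1-ρ))·(Σ_w |c_w|)². -/
/-!
On the unit circle each atom `(1 - |w|²) / (z - w)` has modulus at most `1 + |w| ≤ 2` and is
Lipschitz in `z` with constant `(1 + |w|) / (1 - |w|)`, since `|z - w| ≥ 1 - |w|`. Hence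
`θ ↦ |H(e^{iθ})|²` moves by at most `L |θ - θ'|` with `L = 4 ((1 + ρ)/(1 - ρ)) (∑ |c_w|)²`.
Bounding it on each cell `[θ_k, θ_{k+1}]` by its left-endpoint value plus this linear error gives
the left Riemann sum plus `n · L (2π/n)² / 2`.
-/

open scoped Real
open Complex MeasureTheory

theorem integral_le_of_le_add_mul_sub {f : ℝ → ℝ} {a b L : ℝ} (hab : a ≤ b)
    (hf : IntervalIntegrable f volume a b) (hle : ∀ x ∈ Set.Icc a b, f x ≤ f a + L * (x - a)) :
    ∫ x in a..b, f x ≤ (b - a) * f a + L * (b - a) ^ 2 / 2 := by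
  have hlin : IntervalIntegrable (fun x => f a + L * (x - a)) volume a b := by
    apply Continuous.intervalIntegrable; fun_prop
  calc ∫ x in a..b, f x ≤ ∫ x in a..b, f a + L * (x - a) :=
        intervalIntegral.integral_mono_on hab hf hlin hle
    _ = (b - a) * f a + L * (b - a) ^ 2 / 2 := by
        rw [intervalIntegral.integral_comp_sub_right (fun t => f a + L * t),
          intervalIntegral.integral_add intervalIntegrable_const
            ((continuous_const_mul L).intervalIntegrable _ _),
          intervalIntegral.integral_const_mul, integral_id, intervalIntegral.integral_const]
        simp only [sub_self, smul_eq_mul]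
        ring

theorem integral_le_sum_add_of_le_add_mul_abs {f : ℝ → ℝ} {L : ℝ}
    (hf : ∀ x y, f x ≤ f y + L * |x - y|) (n : ℕ) {h : ℝ} (hh : 0 ≤ h) :
    ∫ x in (0:ℝ)..n * h, f x ≤ h * ∑ k ∈ Finset.range n, f (k * h) + n * (L * h ^ 2 / 2) := by
  have hcont : Continuous f :=
    (LipschitzWith.of_le_add_mul' L fun x y => by simpa only [Real.dist_eq] using hf x y).continuous
  have hsplit := intervalIntegral.sum_integral_adjacent_intervals (a := fun k : ℕ => k * h) (n := n)
    (f := f) (μ := volume) fun k _ => hcont.intervalIntegrable _ _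
  have hcell : ∀ k : ℕ, ∫ x in k * h..(k + 1 : ℕ) * h, f x ≤ h * f (k * h) + L * h ^ 2 / 2 := by
    intro k
    have := integral_le_of_le_add_mul_sub (L := L) (a := k * h) (b := (k + 1 : ℕ) * h)
      (by push_cast; nlinarith) (hcont.intervalIntegrable _ _) fun x hx => by
        simpa only [abs_of_nonneg (sub_nonneg.2 hx.1)] using hf x (k * h)
    convert this using 2 <;> push_cast <;> ring
  simp only [Nat.cast_zero, zero_mul] at hsplit
  rw [← hsplit]
  calc _ ≤ ∑ k ∈ Finset.range n, (h * f (k * h) + L * h ^ 2 / 2) :=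
        Finset.sum_le_sum fun k _ => hcell k
    _ = _ := by rw [Finset.sum_add_distrib, ← Finset.mul_sum]; simp

theorem sq_norm_le_sq_norm_add_of_norm_sub_le {E : Type*} [SeminormedAddCommGroup E]
    {u v : E} {B d : ℝ} (hu : ‖u‖ ≤ B) (hv : ‖v‖ ≤ B) (huv : ‖u - v‖ ≤ d) :
    ‖u‖ ^ 2 ≤ ‖v‖ ^ 2 + 2 * B * d := by
  have hdiff : ‖u‖ - ‖v‖ ≤ d := (norm_sub_norm_le u v).trans huv
  nlinarith [norm_nonneg u, norm_nonneg v, norm_nonneg (u - v)]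

theorem norm_exp_mul_I_sub_exp_mul_I_le (a b : ℝ) :
    ‖exp (a * I) - exp (b * I)‖ ≤ |a - b| := by
  have hfactor : exp (a * I) - exp (b * I) = exp (b * I) * (exp (I * (a - b : ℝ)) - 1) := by
    rw [mul_sub, mul_one, ← Complex.exp_add]
    push_cast
    ring_nf
  rw [hfactor, norm_mul, norm_exp_ofReal_mul_I, one_mul, ← Real.norm_eq_abs]
  exact Real.norm_exp_I_mul_ofReal_sub_one_le

noncomputable def cauchyAtom (w z : ℂ) : ℂ := (1 - (‖w‖ : ℂ) ^ 2) / (z - w)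

noncomputable def atomicSum (W : Finset ℂ) (c : ℂ → ℂ) (z : ℂ) : ℂ := ∑ w ∈ W, c w * cauchyAtom w z

theorem norm_one_sub_sq_norm {w : ℂ} (hw : ‖w‖ ≤ 1) : ‖1 - (‖w‖ : ℂ) ^ 2‖ = 1 - ‖w‖ ^ 2 := by
  rw [← ofReal_pow, ← ofReal_one, ← ofReal_sub, Complex.norm_of_nonneg]
  nlinarith [norm_nonneg w]

theorem one_sub_norm_le_norm_sub {z : ℂ} (hz : ‖z‖ = 1) (w : ℂ) : 1 - ‖w‖ ≤ ‖z - w‖ :=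
  hz ▸ norm_sub_norm_le z w

theorem norm_cauchyAtom_le {w z : ℂ} (hw : ‖w‖ < 1) (hz : ‖z‖ = 1) :
    ‖cauchyAtom w z‖ ≤ 1 + ‖w‖ := by
  have hdist := one_sub_norm_le_norm_sub hz w
  rw [cauchyAtom, norm_div, norm_one_sub_sq_norm hw.le, div_le_iff₀ (by linarith)]
  nlinarith [norm_nonneg w]

theorem norm_cauchyAtom_sub_le {w z z' : ℂ} (hw : ‖w‖ < 1) (hz : ‖z‖ = 1) (hz' : ‖z'‖ = 1) :
    ‖cauchyAtom w z - cauchyAtom w z'‖ ≤ (1 + ‖w‖) / (1 - ‖w‖) * ‖z - z'‖ := by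
  have hd := one_sub_norm_le_norm_sub hz w
  have hd' := one_sub_norm_le_norm_sub hz' w
  have hne : z - w ≠ 0 := norm_pos_iff.1 (by linarith)
  have hne' : z' - w ≠ 0 := norm_pos_iff.1 (by linarith)
  have hdiff : cauchyAtom w z - cauchyAtom w z'
      = (1 - (‖w‖ : ℂ) ^ 2) * (z' - z) / ((z - w) * (z' - w)) := by
    simp only [cauchyAtom]
    field_simp
    ring
  have hprod : (1 - ‖w‖) ^ 2 ≤ ‖z - w‖ * ‖z' - w‖ := by
    rw [sq]; exact mul_le_mul hd hd' (by linarith) (norm_nonneg _)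
  rw [hdiff, norm_div, norm_mul, norm_mul, norm_one_sub_sq_norm hw.le, norm_sub_rev z',
    div_le_iff₀ (by positivity)]
  calc (1 - ‖w‖ ^ 2) * ‖z - z'‖
      = (1 + ‖w‖) / (1 - ‖w‖) * ‖z - z'‖ * (1 - ‖w‖) ^ 2 := by
        field_simp [(by linarith : (1 : ℝ) - ‖w‖ ≠ 0)]; ring
    _ ≤ (1 + ‖w‖) / (1 - ‖w‖) * ‖z - z'‖ * (‖z - w‖ * ‖z' - w‖) := by
        gcongr

section AtomicSum

variable {W : Finset ℂ} {c : ℂ → ℂ}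

theorem norm_atomicSum_le (hW : ∀ w ∈ W, ‖w‖ < 1) {z : ℂ} (hz : ‖z‖ = 1) :
    ‖atomicSum W c z‖ ≤ 2 * ∑ w ∈ W, ‖c w‖ := by
  rw [Finset.mul_sum]
  refine (norm_sum_le _ _).trans (Finset.sum_le_sum fun w hw => ?_)
  rw [norm_mul, mul_comm 2]
  gcongr
  linarith [norm_cauchyAtom_le (hW w hw) hz, hW w hw]

theorem norm_atomicSum_sub_le {ρ : ℝ} (hρ : ρ < 1) (hW : ∀ w ∈ W, ‖w‖ ≤ ρ) {z z' : ℂ}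
    (hz : ‖z‖ = 1) (hz' : ‖z'‖ = 1) :
    ‖atomicSum W c z - atomicSum W c z'‖
      ≤ (1 + ρ) / (1 - ρ) * (∑ w ∈ W, ‖c w‖) * ‖z - z'‖ := by
  rw [atomicSum, atomicSum, ← Finset.sum_sub_distrib, Finset.mul_sum, Finset.sum_mul]
  refine (norm_sum_le _ _).trans (Finset.sum_le_sum fun w hw => ?_)
  have hwρ := hW w hw
  have hratio : (1 + ‖w‖) / (1 - ‖w‖) ≤ (1 + ρ) / (1 - ρ) := by
    rw [div_le_div_iff₀ (by linarith) (by linarith)]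
    nlinarith
  rw [← mul_sub, norm_mul]
  calc ‖c w‖ * ‖cauchyAtom w z - cauchyAtom w z'‖
      ≤ ‖c w‖ * ((1 + ‖w‖) / (1 - ‖w‖) * ‖z - z'‖) := by
        gcongr; exact norm_cauchyAtom_sub_le (by linarith) hz hz'
    _ ≤ ‖c w‖ * ((1 + ρ) / (1 - ρ) * ‖z - z'‖) := by gcongr
    _ = _ := by ring

theorem sq_norm_atomicSum_exp_le {ρ : ℝ} (hρ0 : 0 ≤ ρ) (hρ : ρ < 1) (hW : ∀ w ∈ W, ‖w‖ ≤ ρ)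
    (θ θ' : ℝ) :
    ‖atomicSum W c (exp (θ * I))‖ ^ 2 ≤ ‖atomicSum W c (exp (θ' * I))‖ ^ 2
      + 4 * ((1 + ρ) / (1 - ρ)) * (∑ w ∈ W, ‖c w‖) ^ 2 * |θ - θ'| := by
  have hW' : ∀ w ∈ W, ‖w‖ < 1 := fun w hw => (hW w hw).trans_lt hρ
  have hdiff : ‖atomicSum W c (exp (θ * I)) - atomicSum W c (exp (θ' * I))‖
      ≤ (1 + ρ) / (1 - ρ) * (∑ w ∈ W, ‖c w‖) * |θ - θ'| :=
    (norm_atomicSum_sub_le hρ hW (norm_exp_ofReal_mul_I θ) (norm_exp_ofReal_mul_I θ')).trans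
      (mul_le_mul_of_nonneg_left (norm_exp_mul_I_sub_exp_mul_I_le θ θ')
        (mul_nonneg (div_nonneg (by linarith) (by linarith)) (by positivity)))
  refine (sq_norm_le_sq_norm_add_of_norm_sub_le (norm_atomicSum_le hW' (norm_exp_ofReal_mul_I θ))
    (norm_atomicSum_le hW' (norm_exp_ofReal_mul_I θ')) hdiff).trans_eq ?_
  ring

end AtomicSum

theorem h2_norm_discretization_bound (ρ : ℝ) (hρ0 : 0 ≤ ρ) (hρ : ρ < 1)
    (W : Finset ℂ) (hW : ∀ w ∈ W, ‖w‖ ≤ ρ) (c : ℂ → ℂ)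
    (n : ℕ) (hn : 1 ≤ n)
    (H : ℂ → ℂ)
    (hH : ∀ z : ℂ, H z = ∑ w ∈ W, c w * (1 - (‖w‖ : ℂ)^2) / (z - w)) :
    (1 / (2 * π)) * ∫ θ in (0:ℝ)..(2 * π), (‖H (Complex.exp (θ * Complex.I))‖)^2
      ≤ (1 / n) * ∑ k ∈ Finset.range n,
            (‖H (Complex.exp ((2 * π * k / n) * Complex.I))‖)^2
        + (4 * π / n) * ((1 + ρ) / (1 - ρ)) * (∑ w ∈ W, ‖c w‖)^2 := by
  obtain rfl : H = atomicSum W c :=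
    funext fun z => by simp only [hH, atomicSum, cauchyAtom, mul_div_assoc]
  have hn0 : (n : ℝ) ≠ 0 := by positivity
  have hnodes : ∀ k : ℕ, ((k * (2 * π / n) : ℝ) : ℂ) = 2 * π * k / n := fun k => by
    push_cast; ring
  have hriemann := integral_le_sum_add_of_le_add_mul_abs
    (sq_norm_atomicSum_exp_le (c := c) hρ0 hρ hW) n (h := 2 * π / n) (by positivity)
  rw [mul_div_cancel₀ _ hn0] at hriemann
  simp only [hnodes] at hriemann
  generalize ∑ k ∈ Finset.range n, ‖atomicSum W c (exp (2 * π * k / n * I))‖ ^ 2 = T at hriemann ⊢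
  generalize ∑ w ∈ W, ‖c w‖ = S at hriemann ⊢
  refine (mul_le_mul_of_nonneg_left hriemann (by positivity)).trans_eq ?_
  field_simp
end

section
/- Denoising error bound via dual norm: let ‖·‖_Q be a norm on ℝⁿ, y = x⋆ + ω, and let x̂ minimize f(x) = ½‖x - y‖₂² + μ‖x‖_Q with μ ≥ ‖ω‖_Q* (the dual norm of the noise). Then ‖x̂ - x⋆‖₂² ≤ 2μ‖x⋆‖_Q. -/
open scoped RealInnerProductSpace

/-- The dual norm of a (semi)norm on Euclidean space. -/
noncomputable def dualNorm {n : ℕ} (Q : Seminorm ℝ (EuclideanSpace ℝ (Fin n)))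
    (z : EuclideanSpace ℝ (Fin n)) : ℝ :=
  sSup {r : ℝ | ∃ x : EuclideanSpace ℝ (Fin n), Q x ≤ 1 ∧ r = ⟪x, z⟫}

/-!
Comparing objective values at `x̂` and `x⋆` only gives the constant `4`. Instead, since `x̂`
minimizes `½‖x - y‖² + μ Q x`, moving from `x̂` towards `x⋆` cannot decrease the objective to
first order, which by convexity of `Q` gives `⟪y - x̂, x⋆ - x̂⟫ ≤ μ (Q x⋆ - Q x̂)`. With
`y = x⋆ + ω` the left side is `‖x̂ - x⋆‖² - ⟪x̂ - x⋆, ω⟫`, and Hölder's inequality for the dual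
norm together with `Q (x̂ - x⋆) ≤ Q x̂ + Q x⋆` bounds `⟪x̂ - x⋆, ω⟫ + μ (Q x⋆ - Q x̂)` by `2 μ Q x⋆`.
-/

open Set Filter Topology Metric

theorem nonneg_of_forall_nonneg_add_mul {a b : ℝ}
    (h : ∀ t : ℝ, 0 < t → t ≤ 1 → 0 ≤ a + t * b) : 0 ≤ a := by
  have hlim : Tendsto (fun t : ℝ => a + t * b) (𝓝[>] 0) (𝓝 a) := by
    have : Continuous fun t : ℝ => a + t * b := by fun_prop
    simpa using (this.tendsto 0).mono_left nhdsWithin_le_nhds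
  refine ge_of_tendsto hlim ?_
  filter_upwards [Ioc_mem_nhdsGT one_pos] with t ht using h t ht.1 ht.2

theorem ConvexOn.inner_le_sub_of_prox_minimizer {E : Type*} [NormedAddCommGroup E]
    [InnerProductSpace ℝ E] {g : E → ℝ} (hg : ConvexOn ℝ univ g) {y p : E}
    (hp : ∀ x, 1 / 2 * ‖p - y‖ ^ 2 + g p ≤ 1 / 2 * ‖x - y‖ ^ 2 + g x) (x : E) :
    ⟪y - p, x - p⟫ ≤ g x - g p := by
  have hsegment : ∀ t : ℝ, 0 < t → t ≤ 1 →
      0 ≤ (⟪p - y, x - p⟫ + (g x - g p)) + t * (1 / 2 * ‖x - p‖ ^ 2) := by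
    intro t ht0 ht1
    have hsq : ‖p + t • (x - p) - y‖ ^ 2
        = ‖p - y‖ ^ 2 + 2 * t * ⟪p - y, x - p⟫ + t ^ 2 * ‖x - p‖ ^ 2 := by
      rw [show p + t • (x - p) - y = (p - y) + t • (x - p) by abel, norm_add_sq_real,
        real_inner_smul_right, norm_smul, Real.norm_of_nonneg ht0.le]
      ring
    have hconv : g (p + t • (x - p)) ≤ (1 - t) * g p + t * g x := by
      rw [show p + t • (x - p) = (1 - t) • p + t • x by module]
      exact hg.2 (mem_univ p) (mem_univ x) (by linarith) ht0.le (by ring)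
    have hmin := hp (p + t • (x - p))
    rw [hsq] at hmin
    refine nonneg_of_mul_nonneg_right ?_ ht0
    linarith
  have := nonneg_of_forall_nonneg_add_mul hsegment
  rw [← neg_sub p y, inner_neg_left]
  linarith

theorem Seminorm.exists_pos_mul_norm_le {E : Type*} [NormedAddCommGroup E] [NormedSpace ℝ E]
    [FiniteDimensional ℝ E] (Q : Seminorm ℝ E) (hQ : ∀ x, Q x = 0 → x = 0) :
    ∃ c > 0, ∀ x, c * ‖x‖ ≤ Q x := by
  have hcont : Continuous Q := continuousOn_univ.mp (Q.convexOn.continuousOn isOpen_univ)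
  rcases subsingleton_or_nontrivial E with hE | hE
  · exact ⟨1, one_pos, fun x => by simp [Subsingleton.elim x 0]⟩
  obtain ⟨x₀, hx₀, hmin⟩ := (isCompact_sphere (0 : E) 1).exists_isMinOn
    (NormedSpace.sphere_nonempty.mpr zero_le_one) hcont.continuousOn
  have hx₀0 : x₀ ≠ 0 := ne_zero_of_mem_unit_sphere ⟨x₀, hx₀⟩
  refine ⟨Q x₀, (apply_nonneg Q x₀).lt_of_ne' (mt (hQ x₀) hx₀0), fun x => ?_⟩
  rcases eq_or_ne x 0 with rfl | hx
  · simp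
  have hunit : ‖x‖⁻¹ • x ∈ sphere (0 : E) 1 := by
    simp [norm_smul, hx]
  calc Q x₀ * ‖x‖ ≤ Q (‖x‖⁻¹ • x) * ‖x‖ := by gcongr; exact hmin hunit
    _ = Q x := by
      rw [map_smul_eq_mul, norm_inv, norm_norm, mul_comm, ← mul_assoc,
        mul_inv_cancel₀ (norm_ne_zero_iff.mpr hx), one_mul]

section DualNorm

variable {n : ℕ} {Q : Seminorm ℝ (EuclideanSpace ℝ (Fin n))}

theorem inner_le_dualNorm (hQ : ∀ x, Q x = 0 → x = 0) (z : EuclideanSpace ℝ (Fin n))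
    {x : EuclideanSpace ℝ (Fin n)} (hx : Q x ≤ 1) : ⟪x, z⟫ ≤ dualNorm Q z := by
  obtain ⟨c, hc, hcQ⟩ := Q.exists_pos_mul_norm_le hQ
  refine le_csSup ⟨‖z‖ / c, ?_⟩ ⟨x, hx, rfl⟩
  rintro r ⟨x', hx', rfl⟩
  have hx'c : ‖x'‖ ≤ 1 / c := by
    rw [le_div_iff₀ hc, mul_comm]
    exact (hcQ x').trans hx'
  calc ⟪x', z⟫ ≤ ‖x'‖ * ‖z‖ := real_inner_le_norm x' z
    _ ≤ 1 / c * ‖z‖ := by gcongr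
    _ = ‖z‖ / c := by ring

theorem dualNorm_nonneg (hQ : ∀ x, Q x = 0 → x = 0) (z : EuclideanSpace ℝ (Fin n)) :
    0 ≤ dualNorm Q z := by
  simpa using inner_le_dualNorm hQ z (x := 0) (by simp)

theorem inner_le_dualNorm_mul (hQ : ∀ x, Q x = 0 → x = 0) (x z : EuclideanSpace ℝ (Fin n)) :
    ⟪x, z⟫ ≤ dualNorm Q z * Q x := by
  rcases (apply_nonneg Q x).eq_or_lt' with hx | hx
  · simp [hQ x hx]
  have hunit : Q ((Q x)⁻¹ • x) ≤ 1 := by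
    rw [map_smul_eq_mul, Real.norm_of_nonneg (inv_nonneg.mpr hx.le), inv_mul_cancel₀ hx.ne']
  have := inner_le_dualNorm hQ z hunit
  rwa [real_inner_smul_left, inv_mul_le_iff₀ hx, mul_comm] at this

end DualNorm

theorem denoising_error_bound {n : ℕ} (Q : Seminorm ℝ (EuclideanSpace ℝ (Fin n)))
    (hQ : ∀ x, Q x = 0 → x = 0)
    (xstar ω : EuclideanSpace ℝ (Fin n)) (μ : ℝ) (hμ : dualNorm Q ω ≤ μ)
    (xhat : EuclideanSpace ℝ (Fin n))
    (hopt : ∀ x : EuclideanSpace ℝ (Fin n),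
      (1 / 2) * ‖xhat - (xstar + ω)‖^2 + μ * Q xhat
        ≤ (1 / 2) * ‖x - (xstar + ω)‖^2 + μ * Q x) :
    ‖xhat - xstar‖^2 ≤ 2 * μ * Q xstar := by
  have hμ0 : 0 ≤ μ := (dualNorm_nonneg hQ ω).trans hμ
  have hoptimality : ⟪xstar + ω - xhat, xstar - xhat⟫ ≤ μ * Q xstar - μ * Q xhat :=
    (Q.convexOn.smul hμ0).inner_le_sub_of_prox_minimizer hopt xstar
  have hnoise : ⟪xhat - xstar, ω⟫ ≤ μ * (Q xhat + Q xstar) :=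
    calc ⟪xhat - xstar, ω⟫ ≤ dualNorm Q ω * Q (xhat - xstar) := inner_le_dualNorm_mul hQ _ ω
      _ ≤ μ * (Q xhat + Q xstar) := by gcongr; exact map_sub_le_add Q xhat xstar
  have hsplit : ‖xhat - xstar‖ ^ 2 = ⟪xstar + ω - xhat, xstar - xhat⟫ + ⟪xhat - xstar, ω⟫ := by
    rw [← real_inner_self_eq_norm_sq, show xstar + ω - xhat = -(xhat - xstar) + ω by abel,
      show xstar - xhat = -(xhat - xstar) by abel]
    simp only [inner_neg_right, inner_neg_left, inner_add_left, real_inner_comm ω]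
    ring
  linarith
end
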